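/- arXiv:1403.0665 — 5 statements merged into one kernel-verified Lean document; each statement's English description precedes it below -/
import Mathlib

section
/- Fix a positive integer k and let A be the set of all positive multiples of k. Then the number of compositions of n with no part in A (i.e., no part divisible by k) equals f_n, where f_j = 2^{j-1} for 1 ≤ j ≤ k-1, f_k = 2^{k-1} - 1, and f_j = f_{j-1} + f_{j-2} + ... + f_{j-k} for j > k. -/
noncomputable def compCount (A : Set ℕ) (n : ℕ) : ℕ :=
  Nat.card {l : List ℕ // l.sum = n ∧ ∀ x ∈ l, 0 < x ∧ x ∈ A}

/-!
Splitting off the first part gives `c n = ∑ c (n - a)` over the allowed parts `a ≤ n`. When the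
allowed parts form a `k`-periodic set, shifting the first parts `a > k` down by `k` shows that they
contribute exactly `c (n - k)`; for parts not divisible by `k` this turns the recursion into
`c n = ∑_{i=1}^{k} c (n - i)` for `n > k`. For `n < k` every composition qualifies, giving
`2^(n-1)`, and for `n = k` every composition but the single part `(k)` does.
-/

open Finset

def compositionsIn (A : Set ℕ) (n : ℕ) : Set (List ℕ) :=
  {l | l.sum = n ∧ ∀ x ∈ l, 0 < x ∧ x ∈ A}

def compositionsInEquiv (A : Set ℕ) (n : ℕ) :
    compositionsIn A n ≃ {c : Composition n // ∀ b ∈ c.blocks, b ∈ A} where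
  toFun l := ⟨⟨l.1, fun hx => (l.2.2 _ hx).1, l.2.1⟩, fun b hb => (l.2.2 b hb).2⟩
  invFun c := ⟨c.1.blocks, c.1.blocks_sum, fun _ hx => ⟨c.1.blocks_pos hx, c.2 _ hx⟩⟩
  left_inv _ := rfl
  right_inv _ := rfl

instance (A : Set ℕ) (n : ℕ) : Finite (compositionsIn A n) :=
  .of_equiv _ (compositionsInEquiv A n).symm

theorem compCount_eq_card_composition (A : Set ℕ) (n : ℕ) :
    compCount A n = Nat.card {c : Composition n // ∀ b ∈ c.blocks, b ∈ A} :=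
  Nat.card_congr (compositionsInEquiv A n)

theorem compCount_eq_two_pow_of_Icc_subset {A : Set ℕ} {n : ℕ}
    (h : ∀ a ∈ Icc 1 n, a ∈ A) : compCount A n = 2 ^ (n - 1) := by
  rw [compCount_eq_card_composition, ← composition_card, ← Nat.card_eq_fintype_card]
  exact Nat.card_congr <| Equiv.subtypeUnivEquiv fun c b hb =>
    h b (mem_Icc.2 ⟨c.one_le_blocks hb, c.blocks_le hb⟩)

theorem compCount_eq_two_pow_sub_one_of_Ico_subset {A : Set ℕ} {n : ℕ} (hn : 0 < n)
    (h : ∀ a ∈ Ico 1 n, a ∈ A) (hnA : n ∉ A) : compCount A n = 2 ^ (n - 1) - 1 := by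
  have key (c : Composition n) :
      (∀ b ∈ c.blocks, b ∈ A) ↔ c ≠ Composition.single n hn := by
    have mem_iff (b) (hb : b ∈ c.blocks) : b ∈ A ↔ b < n :=
      ⟨fun hbA => (c.blocks_le hb).lt_of_ne (by rintro rfl; exact hnA hbA),
        fun hlt => h b (mem_Ico.2 ⟨c.one_le_blocks hb, hlt⟩)⟩
    rw [Composition.ne_single_iff hn]
    refine ⟨fun hA i => (mem_iff _ (c.blocksFun_mem_blocks i)).1
      (hA _ (c.blocksFun_mem_blocks i)), fun hlt b hb => ?_⟩
    obtain ⟨i, rfl⟩ := List.mem_iff_get.1 hb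
    exact (mem_iff _ hb).2 (hlt i)
  rw [compCount_eq_card_composition, ← composition_card,
    Nat.card_congr (Equiv.subtypeEquivRight key), Nat.card_eq_fintype_card,
    Fintype.card_subtype_compl, Fintype.card_subtype_eq]

section

variable {A : Set ℕ} [DecidablePred (· ∈ A)]

theorem compCount_eq_sum {n : ℕ} (hn : 0 < n) :
    compCount A n = ∑ a ∈ Icc 1 n with a ∈ A, compCount A (n - a) := by
  set s := {a ∈ Icc 1 n | a ∈ A}
  have cons_mem (p : Σ a : s, compositionsIn A (n - a)) :
      (p.1.1 :: p.2.1) ∈ compositionsIn A n := by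
    obtain ⟨⟨a, ha⟩, l, hsum, hl⟩ := p
    obtain ⟨⟨h1a, han⟩, haA⟩ := by simpa only [s, mem_filter, mem_Icc] using ha
    refine ⟨by simp only [List.sum_cons, hsum]; omega, ?_⟩
    simpa only [List.mem_cons, forall_eq_or_imp] using ⟨⟨h1a, haA⟩, hl⟩
  have hbij : Function.Bijective fun p => (⟨_, cons_mem p⟩ : compositionsIn A n) := by
    refine ⟨?_, ?_⟩
    · rintro ⟨⟨a, ha⟩, l, hl⟩ ⟨⟨b, hb⟩, m, hm⟩ h
      obtain ⟨rfl, rfl⟩ := List.cons_eq_cons.1 (congrArg Subtype.val h)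
      rfl
    · rintro ⟨_ | ⟨a, l⟩, hsum, hl⟩
      · simp at hsum; omega
      · simp only [List.sum_cons, List.mem_cons, forall_eq_or_imp] at hsum hl
        have ha : a ∈ s := by
          simp only [s, mem_filter, mem_Icc]
          exact ⟨⟨hl.1.1, by omega⟩, hl.1.2⟩
        exact ⟨⟨⟨a, ha⟩, l, by simp only; omega, hl.2⟩, rfl⟩
  rw [← sum_coe_sort s]
  exact (Nat.card_eq_of_bijective _ hbij).symm.trans Nat.card_sigma

theorem compCount_eq_of_periodic {k n : ℕ} (hA : ∀ a, 0 < a → (a + k ∈ A ↔ a ∈ A))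
    (hkn : k < n) :
    compCount A n = compCount A (n - k) + ∑ a ∈ Icc 1 k with a ∈ A, compCount A (n - a) := by
  have shift : ∑ a ∈ Icc (k + 1) n with a ∈ A, compCount A (n - a) = compCount A (n - k) := by
    rw [compCount_eq_sum (n := n - k) (by omega)]
    refine sum_nbij' (· - k) (· + k) ?_ ?_ ?_ ?_ ?_ <;> intro a ha <;>
      simp only [mem_filter, mem_Icc] at ha ⊢
    · refine ⟨by omega, (hA (a - k) (by omega)).1 ?_⟩
      rw [Nat.sub_add_cancel (by omega)]
      exact ha.2
    · exact ⟨by omega, (hA a ha.1.1).2 ha.2⟩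
    · omega
    · omega
    · congr 1; omega
  have split : Icc 1 n = Icc 1 k ∪ Icc (k + 1) n := by
    ext a; simp only [mem_union, mem_Icc]; omega
  have disj : Disjoint (Icc 1 k) (Icc (k + 1) n) :=
    disjoint_left.2 fun a ha hb => by simp only [mem_Icc] at ha hb; omega
  rw [compCount_eq_sum (by omega), split, filter_union, sum_union (disjoint_filter_filter disj),
    shift, add_comm]

end

theorem compCount_not_dvd_eq_sum {k n : ℕ} (hk : 1 ≤ k) (hkn : k < n) :
    compCount {x | 0 < x ∧ ¬k ∣ x} n =
      ∑ i ∈ Icc 1 k, compCount {x | 0 < x ∧ ¬k ∣ x} (n - i) := by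
  have periodic (a : ℕ) (_ : 0 < a) :
      a + k ∈ {x | 0 < x ∧ ¬k ∣ x} ↔ a ∈ {x | 0 < x ∧ ¬k ∣ x} := by
    simp only [Set.mem_ofPred_eq, Nat.dvd_add_self_right]
    omega
  have allowed : {a ∈ Icc 1 k | a ∈ {x | 0 < x ∧ ¬k ∣ x}} = Ico 1 k := by
    ext a
    simp only [mem_filter, mem_Icc, mem_Ico, Set.mem_ofPred_eq]
    constructor
    · rintro ⟨⟨h1a, hak⟩, -, hndvd⟩
      exact ⟨h1a, hak.lt_of_ne (by rintro rfl; exact hndvd dvd_rfl)⟩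
    · rintro ⟨h1a, hak⟩
      exact ⟨⟨h1a, hak.le⟩, h1a, Nat.not_dvd_of_pos_of_lt h1a hak⟩
  rw [compCount_eq_of_periodic periodic hkn, allowed, ← Ico_insert_right hk,
    sum_insert (by simp), add_comm]

theorem compositions_avoiding_multiples_of_k (k : ℕ) (hk : 1 ≤ k) (f : ℕ → ℕ)
    (h1 : ∀ j, 1 ≤ j → j ≤ k - 1 → f j = 2 ^ (j - 1))
    (h2 : f k = 2 ^ (k - 1) - 1)
    (h3 : ∀ j, k < j → f j = ∑ i ∈ Finset.Icc 1 k, f (j - i)) :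
    ∀ n, 1 ≤ n → compCount {x | 0 < x ∧ ¬ k ∣ x} n = f n := by
  have below_k : ∀ a ∈ Ico 1 k, a ∈ {x | 0 < x ∧ ¬ k ∣ x} := fun a ha => by
    obtain ⟨h1a, hak⟩ := mem_Ico.1 ha
    exact ⟨h1a, Nat.not_dvd_of_pos_of_lt h1a hak⟩
  intro n
  induction n using Nat.strong_induction_on with
  | _ n ih =>
    intro hn
    rcases lt_trichotomy n k with hlt | rfl | hgt
    · rw [h1 n hn (by omega), compCount_eq_two_pow_of_Icc_subset fun a ha => below_k a ?_]
      simp only [mem_Icc, mem_Ico] at ha ⊢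
      omega
    · rw [h2, compCount_eq_two_pow_sub_one_of_Ico_subset hn below_k (by simp)]
    · rw [h3 n hgt, compCount_not_dvd_eq_sum hk hgt]
      refine sum_congr rfl fun i hi => ih _ ?_ ?_ <;> simp only [mem_Icc] at hi <;> omega
end

section
/- Let A = {1 + 3j : j ≥ 0} (positive integers congruent to 1 mod 3). The counting function c_{\bar A}(n) of compositions of n avoiding A satisfies c_{\bar A}(1) = 0, c_{\bar A}(2) = 1, c_{\bar A}(3) = 1, and c_{\bar A}(n) = c_{\bar A}(n-2) + 2 c_{\bar A}(n-3) for n > 3. -/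
abbrev Sset : Set ℕ := {x | 0 < x ∧ x % 3 ≠ 1}

abbrev Tset (n : ℕ) := {l : List ℕ // l.sum = n ∧ ∀ x ∈ l, 0 < x ∧ x ∈ Sset}

lemma finiteT (n : ℕ) : Finite (Tset n) := by
  apply Finite.of_injective
    (fun l => (⟨l.1, fun hi => (l.2.2 _ hi).1, l.2.1⟩ : Composition n))
  intro a b h
  exact Subtype.ext (congrArg Composition.blocks h)

lemma nil_of_sum_zero {l : List ℕ} (hs : l.sum = 0) (hp : ∀ x ∈ l, 0 < x ∧ x ∈ Sset) :
    l = [] := by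
  cases l with
  | nil => rfl
  | cons a t =>
    have := (hp a (by simp)).1
    simp [List.sum_cons] at hs
    omega

lemma emptyT1 : IsEmpty (Tset 1) := by
  constructor
  rintro ⟨l, hs, hp⟩
  cases l with
  | nil => simp at hs
  | cons a t =>
    obtain ⟨ha, -, ha3⟩ := hp a (by simp)
    simp [List.sum_cons] at hs
    have : a ≤ 1 := by omega
    interval_cases a <;> simp_all

lemma uniqueT2 : ∀ l : Tset 2, l.1 = [2] := by
  rintro ⟨l, hs, hp⟩
  cases l with
  | nil => simp at hs
  | cons a t =>
    obtain ⟨ha, -, ha3⟩ := hp a (by simp)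
    simp [List.sum_cons] at hs
    have ha2 : a = 2 := by
      have : a ≤ 2 := by omega
      interval_cases a <;> simp_all
    subst ha2
    have ht : t = [] := nil_of_sum_zero (by omega) (fun x hx => hp x (by simp [hx]))
    simp [ht]

lemma uniqueT3 : ∀ l : Tset 3, l.1 = [3] := by
  rintro ⟨l, hs, hp⟩
  cases l with
  | nil => simp at hs
  | cons a t =>
    obtain ⟨ha, -, ha3⟩ := hp a (by simp)
    simp [List.sum_cons] at hs
    have ha' : a = 2 ∨ a = 3 := by
      have : a ≤ 3 := by omega
      interval_cases a <;> simp_all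
    rcases ha' with rfl | rfl
    · exfalso
      exact emptyT1.false ⟨t, by omega, fun x hx => hp x (by simp [hx])⟩
    · have ht : t = [] := nil_of_sum_zero (by omega) (fun x hx => hp x (by simp [hx]))
      simp [ht]

theorem compositions_avoiding_one_mod_three :
    compCount {x | 0 < x ∧ x % 3 ≠ 1} 1 = 0 ∧
    compCount {x | 0 < x ∧ x % 3 ≠ 1} 2 = 1 ∧
    compCount {x | 0 < x ∧ x % 3 ≠ 1} 3 = 1 ∧
    ∀ n, 3 < n →
      compCount {x | 0 < x ∧ x % 3 ≠ 1} n =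
        compCount {x | 0 < x ∧ x % 3 ≠ 1} (n - 2) +
          2 * compCount {x | 0 < x ∧ x % 3 ≠ 1} (n - 3) := by
  refine ⟨?_, ?_, ?_, ?_⟩
  · haveI := emptyT1; exact Nat.card_of_isEmpty (α := Tset 1)
  · have : Unique (Tset 2) := ⟨⟨⟨[2], by simp, by rintro x hx; simp at hx; subst hx; exact ⟨by norm_num, by norm_num, by norm_num⟩⟩⟩,
      fun l => Subtype.ext (uniqueT2 l)⟩
    exact Nat.card_unique
  · have : Unique (Tset 3) := ⟨⟨⟨[3], by simp, by rintro x hx; simp at hx; subst hx; exact ⟨by norm_num, by norm_num, by norm_num⟩⟩⟩,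
      fun l => Subtype.ext (uniqueT3 l)⟩
    exact Nat.card_unique
  · intro n hn
    haveI := finiteT (n - 2)
    haveI := finiteT (n - 3)
    -- bijection
    let g : List ℕ → List ℕ := fun l => match l with
      | [] => []
      | a :: t => (a + 3) :: t
    have hg : ∀ (l : Tset (n - 3)), (g l.1).sum = n ∧ ∀ x ∈ g l.1, 0 < x ∧ x ∈ Sset := by
      rintro ⟨l, hs, hp⟩
      cases l with
      | nil => exfalso; simp at hs; omega
      | cons a t =>
        obtain ⟨ha, -, ha3⟩ := hp a (by simp)
        simp only [List.sum_cons] at hs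
        constructor
        · show (a + 3) + t.sum = n
          omega
        · intro x hx
          rcases List.mem_cons.1 hx with rfl | hx
          · exact ⟨by omega, by omega, by omega⟩
          · exact hp x (by simp [hx])
    let f : Tset (n - 2) ⊕ Tset (n - 3) ⊕ Tset (n - 3) → Tset n := fun s =>
      match s with
      | Sum.inl ⟨l, hs, hp⟩ => ⟨2 :: l, by simp [List.sum_cons, hs]; omega,
          by rintro x hx; rcases List.mem_cons.1 hx with rfl | hx
             · exact ⟨by norm_num, by norm_num, by norm_num⟩
             · exact hp x hx⟩
      | Sum.inr (Sum.inl ⟨l, hs, hp⟩) => ⟨3 :: l, by simp [List.sum_cons, hs]; omega,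
          by rintro x hx; rcases List.mem_cons.1 hx with rfl | hx
             · exact ⟨by norm_num, by norm_num, by norm_num⟩
             · exact hp x hx⟩
      | Sum.inr (Sum.inr l) => ⟨g l.1, hg l⟩
    have hfb : Function.Bijective f := by
      constructor
      · rintro (⟨a, hsa, hpa⟩ | ⟨a, hsa, hpa⟩ | ⟨a, hsa, hpa⟩)
          (⟨b, hsb, hpb⟩ | ⟨b, hsb, hpb⟩ | ⟨b, hsb, hpb⟩) h <;>
          simp only [f, Subtype.mk.injEq] at h
        · simp_all
        · simp at h
        · exfalso
          cases b with
          | nil => simp at hsb; omega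
          | cons c t =>
            obtain ⟨hc, -, hc3⟩ := hpb c (by simp)
            simp [g] at h
            try omega
        · simp at h
        · simp_all
        · exfalso
          cases b with
          | nil => simp at hsb; omega
          | cons c t =>
            obtain ⟨hc, -, hc3⟩ := hpb c (by simp)
            simp [g] at h
            try omega
        · exfalso
          cases a with
          | nil => simp at hsa; omega
          | cons c t =>
            obtain ⟨hc, -, hc3⟩ := hpa c (by simp)
            simp [g] at h
            try omega
        · exfalso
          cases a with
          | nil => simp at hsa; omega
          | cons c t =>
            obtain ⟨hc, -, hc3⟩ := hpa c (by simp)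
            simp [g] at h
            try omega
        · cases a with
          | nil => simp at hsa; omega
          | cons c t =>
            cases b with
            | nil => simp at hsb; omega
            | cons d u =>
              simp only [g, List.cons.injEq] at h
              simp_all
      · rintro ⟨l, hs, hp⟩
        cases l with
        | nil => exfalso; simp at hs; omega
        | cons a t =>
          obtain ⟨ha, -, ha3⟩ := hp a (by simp)
          simp only [List.sum_cons] at hs
          have ht : ∀ x ∈ t, 0 < x ∧ x ∈ Sset := fun x hx => hp x (by simp [hx])
          by_cases h2 : a = 2
          · subst h2
            exact ⟨Sum.inl ⟨t, by omega, ht⟩, rfl⟩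
          · by_cases h3 : a = 3
            · subst h3
              exact ⟨Sum.inr (Sum.inl ⟨t, by omega, ht⟩), rfl⟩
            · have ha5 : 5 ≤ a := by omega
              refine ⟨Sum.inr (Sum.inr ⟨(a - 3) :: t, by simp [List.sum_cons]; omega,
                ?_⟩), ?_⟩
              · rintro x hx
                rcases List.mem_cons.1 hx with rfl | hx
                · exact ⟨by omega, by omega, by omega⟩
                · exact ht x hx
              · show (⟨g ((a-3)::t), _⟩ : Tset n) = _
                simp only [g]
                congr 1
                simp
                omega
    have key : Nat.card (Tset n) =
        Nat.card (Tset (n - 2) ⊕ Tset (n - 3) ⊕ Tset (n - 3)) :=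
      (Nat.card_eq_of_bijective f hfb).symm
    show Nat.card (Tset n) = Nat.card (Tset (n-2)) + 2 * Nat.card (Tset (n-3))
    rw [key, Nat.card_sum, Nat.card_sum]
    ring
end

section
/- Let A = {2 + 3j : j ≥ 0}. The counting function c_{\bar A}(n) of compositions of n with no part ≡ 2 (mod 3) satisfies c_{\bar A}(1) = 1, c_{\bar A}(2) = 1, c_{\bar A}(3) = 2, and c_{\bar A}(n) = c_{\bar A}(n-1) + 2 c_{\bar A}(n-3) for n > 3. -/
abbrev Aset : Set ℕ := {x | 0 < x ∧ x % 3 ≠ 2}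

abbrev T (n : ℕ) := {l : List ℕ // l.sum = n ∧ ∀ x ∈ l, 0 < x ∧ x ∈ Aset}

instance finT (n : ℕ) : Finite (T n) := by
  have : Function.Injective (fun l : T n => (⟨l.1, fun hi => (l.2.2 _ hi).1, l.2.1⟩ : Composition n)) := by
    intro a b h
    exact Subtype.ext (congrArg Composition.blocks h)
  exact Finite.of_injective _ this

lemma sum_zero (t : List ℕ) (ht : t.sum = 0) (hp : ∀ x ∈ t, 0 < x ∧ x ∈ Aset) : t = [] := by
  cases t with
  | nil => rfl
  | cons a s =>
    have := (hp a (by simp)).1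
    simp [List.sum_cons] at ht
    omega

lemma mem1 (l : List ℕ) (hs : l.sum = 1) (hp : ∀ x ∈ l, 0 < x ∧ x ∈ Aset) : l = [1] := by
  cases l with
  | nil => simp at hs
  | cons a t =>
    have ha := (hp a (by simp)).1
    simp [List.sum_cons] at hs
    have : a = 1 := by omega
    subst this
    have : t.sum = 0 := by omega
    rw [sum_zero t this (fun x hx => hp x (by simp [hx]))]

lemma mem2 (l : List ℕ) (hs : l.sum = 2) (hp : ∀ x ∈ l, 0 < x ∧ x ∈ Aset) : l = [1, 1] := by
  cases l with
  | nil => simp at hs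
  | cons a t =>
    have ha := hp a (by simp)
    have ha2 : a % 3 ≠ 2 := ha.2.2
    simp [List.sum_cons] at hs
    have : a = 1 := by omega
    subst this
    have ht : t.sum = 1 := by omega
    rw [mem1 t ht (fun x hx => hp x (by simp [hx]))]

lemma mem3 (l : List ℕ) (hs : l.sum = 3) (hp : ∀ x ∈ l, 0 < x ∧ x ∈ Aset) :
    l = [3] ∨ l = [1, 1, 1] := by
  cases l with
  | nil => simp at hs
  | cons a t =>
    have ha := hp a (by simp)
    have ha2 : a % 3 ≠ 2 := ha.2.2
    have ha1 := ha.1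
    simp [List.sum_cons] at hs
    have : a = 1 ∨ a = 3 := by omega
    rcases this with h | h
    · subst h
      right
      have ht : t.sum = 2 := by omega
      rw [mem2 t ht (fun x hx => hp x (by simp [hx]))]
    · subst h
      left
      have ht : t.sum = 0 := by omega
      rw [sum_zero t ht (fun x hx => hp x (by simp [hx]))]

lemma okA (a : ℕ) (h1 : 0 < a) (h2 : a % 3 ≠ 2) : 0 < a ∧ a ∈ Aset := ⟨h1, h1, h2⟩

def recEquiv (m : ℕ) : T (m + 4) ≃ (T (m + 3)) ⊕ ((T (m + 1)) ⊕ (T (m + 1))) where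
  toFun := fun ⟨l, hl⟩ =>
    match l, hl with
    | [], h => absurd h.1 (by simp)
    | 0 :: t, h => absurd (h.2 0 (by simp)).1 (by simp)
    | 1 :: t, h => Sum.inl ⟨t, by simp [List.sum_cons] at h; omega,
        fun x hx => h.2 x (by simp [hx])⟩
    | 2 :: t, h => absurd (h.2 2 (by simp)).2.2 (by norm_num)
    | 3 :: t, h => Sum.inr (Sum.inl ⟨t, by simp [List.sum_cons] at h; omega,
        fun x hx => h.2 x (by simp [hx])⟩)
    | (a + 4) :: t, h => Sum.inr (Sum.inr ⟨(a + 1) :: t, by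
        have := h.1
        simp [List.sum_cons] at this ⊢
        omega,
        by
          intro x hx
          rcases List.mem_cons.mp hx with rfl | hx
          · have := (h.2 (a + 4) (by simp)).2.2
            refine okA _ (by omega) ?_
            omega
          · exact h.2 x (by simp [hx])⟩)
  invFun := fun s =>
    match s with
    | Sum.inl ⟨t, ht⟩ => ⟨1 :: t, by simp [List.sum_cons, ht.1]; omega, by
        intro x hx
        rcases List.mem_cons.mp hx with rfl | hx
        · exact okA 1 (by norm_num) (by norm_num)
        · exact ht.2 x hx⟩
    | Sum.inr (Sum.inl ⟨t, ht⟩) => ⟨3 :: t, by simp [List.sum_cons, ht.1]; omega, by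
        intro x hx
        rcases List.mem_cons.mp hx with rfl | hx
        · exact okA 3 (by norm_num) (by norm_num)
        · exact ht.2 x hx⟩
    | Sum.inr (Sum.inr ⟨l', hl'⟩) =>
      match l', hl' with
      | [], h => absurd h.1 (by simp)
      | a :: t, h => ⟨(a + 3) :: t, by
          have := h.1
          simp [List.sum_cons] at this ⊢
          omega,
          by
            intro x hx
            rcases List.mem_cons.mp hx with rfl | hx
            · have := (h.2 a (by simp)).2.2
              refine okA _ (by omega) ?_
              omega
            · exact h.2 x (by simp [hx])⟩
  left_inv := by
    rintro ⟨l, hl⟩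
    match l, hl with
    | [], h => exact absurd h.1 (by simp)
    | 0 :: t, h => exact absurd (h.2 0 (by simp)).1 (by simp)
    | 1 :: t, h => rfl
    | 2 :: t, h => exact absurd (h.2 2 (by simp)).2.2 (by norm_num)
    | 3 :: t, h => rfl
    | (a + 4) :: t, h => rfl
  right_inv := by
    rintro (⟨t, ht⟩ | ⟨t, ht⟩ | ⟨l', hl'⟩)
    · rfl
    · rfl
    · match l', hl' with
      | [], h => exact absurd h.1 (by simp)
      | a :: t, h =>
        have ha := (h.2 a (by simp)).1
        match a, ha with
        | a + 1, _ => rfl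

lemma compCount_T (n : ℕ) : compCount Aset n = Nat.card (T n) := rfl

theorem compositions_avoiding_two_mod_three :
    compCount {x | 0 < x ∧ x % 3 ≠ 2} 1 = 1 ∧
    compCount {x | 0 < x ∧ x % 3 ≠ 2} 2 = 1 ∧
    compCount {x | 0 < x ∧ x % 3 ≠ 2} 3 = 2 ∧
    ∀ n, 3 < n →
      compCount {x | 0 < x ∧ x % 3 ≠ 2} n =
        compCount {x | 0 < x ∧ x % 3 ≠ 2} (n - 1) +
          2 * compCount {x | 0 < x ∧ x % 3 ≠ 2} (n - 3) := by
  refine ⟨?_, ?_, ?_, ?_⟩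
  · rw [compCount_T, Nat.card_eq_one_iff_unique]
    constructor
    · constructor
      intro a b
      exact Subtype.ext ((mem1 _ a.2.1 a.2.2).trans (mem1 _ b.2.1 b.2.2).symm)
    · exact ⟨⟨[1], by simp, by rintro x hx; simp at hx; subst hx; exact okA 1 one_pos (by norm_num)⟩⟩
  · rw [compCount_T, Nat.card_eq_one_iff_unique]
    constructor
    · constructor
      intro a b
      exact Subtype.ext ((mem2 _ a.2.1 a.2.2).trans (mem2 _ b.2.1 b.2.2).symm)
    · exact ⟨⟨[1, 1], by simp, by
        rintro x hx; simp at hx; subst hx; exact okA 1 one_pos (by norm_num)⟩⟩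
  · rw [compCount_T, Nat.card_eq_two_iff]
    refine ⟨⟨[3], by simp, ?_⟩, ⟨[1, 1, 1], by simp, ?_⟩, ?_, ?_⟩
    · rintro x hx; simp at hx; subst hx; exact okA 3 (by norm_num) (by norm_num)
    · rintro x hx; simp at hx; subst hx; exact okA 1 one_pos (by norm_num)
    · intro h; simp at h
    · apply Set.eq_univ_iff_forall.mpr
      intro l
      rcases mem3 l.1 l.2.1 l.2.2 with h | h
      · exact Set.mem_insert_iff.mpr (Or.inl (Subtype.ext h))
      · exact Set.mem_insert_iff.mpr (Or.inr (Subtype.ext h))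
  · intro n hn
    obtain ⟨m, rfl⟩ : ∃ m, n = m + 4 := ⟨n - 4, by omega⟩
    have h1 : m + 4 - 1 = m + 3 := by omega
    have h3 : m + 4 - 3 = m + 1 := by omega
    rw [h1, h3, compCount_T, compCount_T, compCount_T, Nat.card_congr (recEquiv m),
      Nat.card_sum, Nat.card_sum]
    ring
end

section
/- Fix positive integers a and b. For every positive integer n, the number of compositions of n + a with parts in {a + bj : j ≥ 0} equals the number of compositions of n + b with parts in {aj + b : j ≥ 0}. -/
/-- Conjugation on nonempty lists of naturals: viewing `(j₁,…,j_k)` as the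
binary word `0^{j₁} 1 0^{j₂} 1 … 1 0^{j_k}`, read off the blocks of ones
separated by zeros. Swaps (length, sum+1). -/
def zconj : List ℕ → List ℕ
  | [] => []
  | j :: rest =>
    List.replicate j 0 ++
      (match rest with
       | [] => [0]
       | r :: rs => (zconj (r :: rs)).modifyHead (· + 1))

@[simp] lemma zconj_singleton (j : ℕ) : zconj [j] = List.replicate j 0 ++ [0] := rfl

lemma zconj_cons_cons (j r : ℕ) (rs : List ℕ) :
    zconj (j :: r :: rs) = List.replicate j 0 ++ (zconj (r :: rs)).modifyHead (· + 1) := rfl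

lemma zconj_ne_nil (l : List ℕ) (h : l ≠ []) : zconj l ≠ [] := by
  match l with
  | [] => exact absurd rfl h
  | j :: [] => simp
  | j :: r :: rs =>
    rw [zconj_cons_cons]
    obtain ⟨c, t, hct⟩ := List.exists_cons_of_ne_nil (zconj_ne_nil (r :: rs) (by simp))
    rw [hct]
    simp

lemma zconj_length (l : List ℕ) (h : l ≠ []) : (zconj l).length = l.sum + 1 := by
  match l with
  | [] => exact absurd rfl h
  | j :: [] => simp
  | j :: r :: rs =>
    rw [zconj_cons_cons]
    have ih := zconj_length (r :: rs) (by simp)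
    simp [List.length_modifyHead, ih]
    omega

lemma zconj_sum (l : List ℕ) (h : l ≠ []) : (zconj l).sum + 1 = l.length := by
  match l with
  | [] => exact absurd rfl h
  | j :: [] => simp
  | j :: r :: rs =>
    rw [zconj_cons_cons]
    have ih := zconj_sum (r :: rs) (by simp)
    have hne := zconj_ne_nil (r :: rs) (by simp)
    obtain ⟨c, t, hct⟩ := List.exists_cons_of_ne_nil hne
    rw [hct] at ih ⊢
    simp at ih ⊢
    omega

lemma zconj_cons_succ (c : ℕ) (t : List ℕ) : zconj ((c + 1) :: t) = 0 :: zconj (c :: t) := by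
  cases t with
  | nil => simp [List.replicate_succ]
  | cons r rs => rw [zconj_cons_cons, zconj_cons_cons, List.replicate_succ]; simp

lemma zconj_replicate_append (j c : ℕ) (t : List ℕ) :
    zconj (List.replicate j 0 ++ (c :: t)) = (zconj (c :: t)).modifyHead (· + j) := by
  induction j with
  | zero =>
    obtain ⟨c', t', h⟩ := List.exists_cons_of_ne_nil (zconj_ne_nil (c :: t) (by simp))
    simp [h]
  | succ j ih =>
    rw [List.replicate_succ, List.cons_append]
    cases h : List.replicate j 0 ++ (c :: t) with
    | nil => simp at h
    | cons r rs =>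
      rw [zconj_cons_cons]
      rw [← h]
      rw [ih]
      obtain ⟨c', t', h2⟩ := List.exists_cons_of_ne_nil (zconj_ne_nil (c :: t) (by simp))
      rw [h2]
      simp
      omega

lemma zconj_zconj (l : List ℕ) (h : l ≠ []) : zconj (zconj l) = l := by
  match l with
  | [] => exact absurd rfl h
  | j :: [] =>
    rw [zconj_singleton]
    rw [zconj_replicate_append j 0 []]
    simp [List.modifyHead]
  | j :: r :: rs =>
    have ih := zconj_zconj (r :: rs) (by simp)
    rw [zconj_cons_cons]
    obtain ⟨c, t, hct⟩ := List.exists_cons_of_ne_nil (zconj_ne_nil (r :: rs) (by simp))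
    rw [hct]
    simp only [List.modifyHead]
    rw [zconj_replicate_append j (c + 1) t, zconj_cons_succ]
    simp only [List.modifyHead]
    rw [← hct, ih]
    simp

lemma sum_map_affine (a b : ℕ) (w : List ℕ) :
    (w.map (fun j => a * j + b)).sum = a * w.sum + b * w.length := by
  induction w with
  | nil => simp
  | cons x xs ih => simp [ih]; ring

/-- The translation map between the two families of compositions. -/
def ztr (a b : ℕ) (l : List ℕ) : List ℕ :=
  (zconj (l.map (fun x => (x - a) / b))).map (fun j => a * j + b)

lemma map_recover (a b : ℕ) (hb : 1 ≤ b) (l : List ℕ)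
    (h : ∀ x ∈ l, ∃ j : ℕ, x = a + b * j) :
    (l.map (fun x => (x - a) / b)).map (fun j => a + b * j) = l := by
  rw [List.map_map]
  conv_rhs => rw [← List.map_id l]
  apply List.map_congr_left
  intro x hx
  obtain ⟨j, hj⟩ := h x hx
  subst hj
  have hdiv : b * j / b = j := Nat.mul_div_cancel_left _ (by omega)
  simp [hdiv]

lemma ztr_sum (a b : ℕ) (ha : 1 ≤ a) (hb : 1 ≤ b) (l : List ℕ) (hne : l ≠ [])
    (h : ∀ x ∈ l, ∃ j : ℕ, x = a + b * j) :
    (ztr a b l).sum + a = l.sum + b := by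
  set js := l.map (fun x => (x - a) / b) with hjs
  have hjne : js ≠ [] := by simpa [hjs] using hne
  have hlsum : l.sum = b * js.sum + a * js.length := by
    conv_lhs => rw [← map_recover a b hb l h]
    rw [show (fun j => a + b * j) = (fun j => b * j + a) from by funext j; ring]
    rw [sum_map_affine, ← hjs]
  have h1 := zconj_sum js hjne
  have h2 := zconj_length js hjne
  have hlen : js.length = l.length := by simp [hjs]
  rw [ztr, ← hjs, sum_map_affine, h2, hlsum]
  have : js.length = (zconj js).sum + 1 := h1.symm
  rw [this]
  ring

lemma ztr_ztr (a b : ℕ) (ha : 1 ≤ a) (hb : 1 ≤ b) (l : List ℕ) (hne : l ≠ [])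
    (h : ∀ x ∈ l, ∃ j : ℕ, x = a + b * j) :
    ztr b a (ztr a b l) = l := by
  set js := l.map (fun x => (x - a) / b) with hjs
  have hjne : js ≠ [] := by simpa [hjs] using hne
  have step1 : (ztr a b l).map (fun y => (y - b) / a) = zconj js := by
    rw [ztr, ← hjs, List.map_map]
    conv_rhs => rw [← List.map_id (zconj js)]
    apply List.map_congr_left
    intro j _
    have hdiv : a * j / a = j := Nat.mul_div_cancel_left _ (by omega)
    simp [hdiv]
  rw [ztr, step1, zconj_zconj js hjne, hjs, List.map_map]
  conv_rhs => rw [← List.map_id l]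
  apply List.map_congr_left
  intro x hx
  obtain ⟨j, hj⟩ := h x hx
  subst hj
  have hdiv : b * j / b = j := Nat.mul_div_cancel_left _ (by omega)
  simp [hdiv]
  ring

theorem zeilberger_compositions_symmetric (a b : ℕ) (ha : 1 ≤ a) (hb : 1 ≤ b)
    (n : ℕ) (hn : 1 ≤ n) :
    compCount {x | ∃ j : ℕ, x = a + b * j} (n + a) =
      compCount {x | ∃ j : ℕ, x = a * j + b} (n + b) := by
  unfold compCount
  apply Nat.card_congr
  refine
    { toFun := fun p => ⟨ztr a b p.1, ?_, ?_⟩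
      invFun := fun p => ⟨ztr b a p.1, ?_, ?_⟩
      left_inv := ?_
      right_inv := ?_ }
  · obtain ⟨l, hsum, hmem⟩ := p
    have hne : l ≠ [] := by
      intro h; rw [h] at hsum; simp at hsum; omega
    have := ztr_sum a b ha hb l hne (fun x hx => (hmem x hx).2)
    simp only at this ⊢
    omega
  · intro x hx
    simp only [ztr] at hx
    rw [List.mem_map] at hx
    obtain ⟨j, _, hj⟩ := hx
    exact ⟨by omega, ⟨j, hj.symm⟩⟩
  · obtain ⟨l, hsum, hmem⟩ := p
    have hmem' : ∀ x ∈ l, ∃ j : ℕ, x = b + a * j := by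
      intro x hx
      obtain ⟨j, hj⟩ := (hmem x hx).2
      exact ⟨j, by omega⟩
    have hne : l ≠ [] := by
      intro h; rw [h] at hsum; simp at hsum; omega
    have := ztr_sum b a hb ha l hne hmem'
    simp only at this ⊢
    omega
  · intro x hx
    simp only [ztr] at hx
    rw [List.mem_map] at hx
    obtain ⟨j, _, hj⟩ := hx
    exact ⟨by omega, ⟨j, by omega⟩⟩
  · rintro ⟨l, hsum, hmem⟩
    have hne : l ≠ [] := by
      intro h; rw [h] at hsum; simp at hsum; omega
    exact Subtype.ext (ztr_ztr a b ha hb l hne (fun x hx => (hmem x hx).2))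
  · rintro ⟨l, hsum, hmem⟩
    have hne : l ≠ [] := by
      intro h; rw [h] at hsum; simp at hsum; omega
    have hmem' : ∀ x ∈ l, ∃ j : ℕ, x = b + a * j := by
      intro x hx
      obtain ⟨j, hj⟩ := (hmem x hx).2
      exact ⟨j, by omega⟩
    exact Subtype.ext (ztr_ztr b a hb ha l hne hmem')
end

section
/- For the set A = {1 + 3j : j ≥ 0}, the number of compositions of n avoiding A is given by the closed formula c_{\bar A}(n) = Σ over the three roots ρ of 1 - x^2 - 2x^3 of ((1+ρ)/(2+6ρ)) · ρ^{-n}. -/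
/-!
Write `c = compCount A`. Splitting off the first part gives
`c (n + 1) = ∑_{i + j = n, i + 1 ∈ A} c j`. Since `A = {2, 3, 5, 6, 8, 9, …}` is invariant
under `k ↦ k + 3` for `k ≥ 1` and additionally contains `3`, this yields
`c (n + 4) = c (n + 2) + 2 c (n + 1)`. The roots of `1 - x² - 2x³` are the reciprocals of the
roots of `X³ - X - 2`, so each `ρ⁻ⁿ` satisfies the same recurrence, and it remains to compare
three initial values. By Vieta, `ρ (2 + 6ρ) = 2 (ρ - σ)(ρ - τ)` for the other two roots `σ, τ`,
which turns these values into the partial-fraction identities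
`∑ ρᵏ / ((ρ - σ)(ρ - τ)) = 0, 0, 1` (`k = 0, 1, 2`) and `∑ 1 / (ρ (ρ - σ)(ρ - τ)) = 1 / (αβγ)`.
-/

open Finset

def compositionsWith (A : Set ℕ) (n : ℕ) : Set (List ℕ) :=
  {l | l.sum = n ∧ ∀ x ∈ l, 0 < x ∧ x ∈ A}

section Compositions

variable (A : Set ℕ)

theorem finite_compositionsWith (n : ℕ) : (compositionsWith A n).Finite :=
  (Set.finite_range Composition.blocks).subset fun l hl =>
    ⟨⟨l, fun hx => (hl.2 _ hx).1, hl.1⟩, rfl⟩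

theorem compositionsWith_zero : compositionsWith A 0 = {[]} := by
  ext (_ | ⟨a, t⟩)
  · simp [compositionsWith]
  · simp only [compositionsWith, Set.mem_ofPred_eq, List.sum_cons, Set.mem_singleton_iff,
      reduceCtorEq, iff_false, not_and]
    intro h hpos
    have := (hpos a List.mem_cons_self).1
    omega

/-- The first part is encoded as `i + 1`, so that `(i, j)` ranges over `antidiagonal n`. -/
def compositionsWithSuccEquiv (n : ℕ) : compositionsWith A (n + 1) ≃
    Σ p : antidiagonal n, {t // p.1.1 + 1 ∈ A ∧ t ∈ compositionsWith A p.1.2} where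
  toFun
    | ⟨[], h⟩ => absurd h.1 (by simp)
    | ⟨a :: t, h⟩ =>
      have ha := h.2 a List.mem_cons_self
      ⟨⟨(a - 1, t.sum), by have := h.1; simp at this ⊢; omega⟩,
        t, by rw [Nat.sub_add_cancel ha.1]; exact ha.2,
        rfl, fun x hx => h.2 x (List.mem_cons_of_mem a hx)⟩
  invFun := fun ⟨p, t, ht⟩ => ⟨(p.1.1 + 1) :: t, by
    refine ⟨?_, ?_⟩
    · have := mem_antidiagonal.1 p.2
      simp [ht.2.1]
      omega
    · rintro x (_ | ⟨_, hx⟩)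
      · exact ⟨Nat.succ_pos _, ht.1⟩
      · exact ht.2.2 x hx⟩
  left_inv := by
    rintro ⟨_ | ⟨a, t⟩, h⟩
    · exact absurd h.1 (by simp)
    · have := (h.2 a List.mem_cons_self).1
      ext1
      simp
      omega
  right_inv := by
    rintro ⟨⟨⟨i, j⟩, hp⟩, t, ht⟩
    exact Sigma.subtype_ext (Subtype.ext (Prod.ext (by simp) ht.2.1)) rfl

theorem compCount_eq_card (n : ℕ) : compCount A n = Nat.card (compositionsWith A n) := rfl

theorem compCount_zero : compCount A 0 = 1 := by
  rw [compCount_eq_card, compositionsWith_zero, Nat.card_unique]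

theorem compCount_succ [DecidablePred (· ∈ A)] (n : ℕ) :
    compCount A (n + 1) =
      ∑ p ∈ antidiagonal n, if p.1 + 1 ∈ A then compCount A p.2 else 0 := by
  have (p : ℕ × ℕ) : Finite {t // p.1 + 1 ∈ A ∧ t ∈ compositionsWith A p.2} :=
    have := (finite_compositionsWith A p.2).to_subtype
    Finite.of_injective (fun t => (⟨t.1, t.2.2⟩ : compositionsWith A p.2))
      fun _ _ h => Subtype.ext (by simpa using h)
  rw [compCount_eq_card, Nat.card_congr (compositionsWithSuccEquiv A n), Nat.card_sigma,
    ← sum_coe_sort (antidiagonal n)]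
  refine sum_congr rfl fun p _ => ?_
  split_ifs with hp
  · exact Nat.card_congr (Equiv.subtypeEquivRight fun t => and_iff_right hp)
  · simp [hp]

end Compositions

theorem compCount_add_four (n : ℕ) :
    compCount {x | 0 < x ∧ x % 3 ≠ 1} (n + 4) =
      compCount {x | 0 < x ∧ x % 3 ≠ 1} (n + 2) +
        2 * compCount {x | 0 < x ∧ x % 3 ≠ 1} (n + 1) := by
  have periodic (i : ℕ) :
      i + 1 + 1 + 1 + 1 ∈ {x | 0 < x ∧ x % 3 ≠ 1} ↔ i + 1 ∈ {x | 0 < x ∧ x % 3 ≠ 1} := by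
    simp only [Set.mem_ofPred_eq]
    omega
  rw [compCount_succ, Nat.sum_antidiagonal_succ, Nat.sum_antidiagonal_succ,
    Nat.sum_antidiagonal_succ, compCount_succ _ n]
  norm_num [periodic, two_mul, add_assoc]

theorem vieta_cubic {K : Type*} [Field K] {a b c α β γ : K}
    (hαβ : α ≠ β) (hαγ : α ≠ γ) (hβγ : β ≠ γ)
    (hα : α ^ 3 + a * α ^ 2 + b * α + c = 0) (hβ : β ^ 3 + a * β ^ 2 + b * β + c = 0)
    (hγ : γ ^ 3 + a * γ ^ 2 + b * γ + c = 0) :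
    α + β + γ = -a ∧ α * β + β * γ + γ * α = b ∧ α * β * γ = -c := by
  have hαβ' : α ^ 2 + α * β + β ^ 2 + a * (α + β) + b = 0 :=
    mul_left_cancel₀ (sub_ne_zero.2 hαβ) (by linear_combination hα - hβ)
  have hαγ' : α ^ 2 + α * γ + γ ^ 2 + a * (α + γ) + b = 0 :=
    mul_left_cancel₀ (sub_ne_zero.2 hαγ) (by linear_combination hα - hγ)
  have e1 : α + β + γ = -a :=
    mul_left_cancel₀ (sub_ne_zero.2 hβγ) (by linear_combination hαβ' - hαγ')
  have e2 : α * β + β * γ + γ * α = b := by linear_combination -hαβ' + (α + β) * e1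
  exact ⟨e1, e2, by linear_combination hα - α ^ 2 * e1 + α * e2⟩

theorem LinearRecurrence.IsSolution.shift {R : Type*} [CommSemiring R]
    {E : LinearRecurrence R} {u : ℕ → R} (h : E.IsSolution u) :
    E.IsSolution fun n => u (n + 1) := fun n => by
  simpa only [Nat.add_right_comm] using h (n + 1)

/-- The characteristic polynomial `X³ - X - 2` is the reciprocal of `1 - x² - 2x³`. -/
def compRecurrence : LinearRecurrence ℂ := ⟨3, ![2, 1, 0]⟩

theorem compRecurrence_isSolution_iff {u : ℕ → ℂ} :
    compRecurrence.IsSolution u ↔ ∀ n, u (n + 3) = u (n + 1) + 2 * u n := by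
  change (∀ n, u (n + 3) = ∑ i : Fin 3, ![(2 : ℂ), 1, 0] i * u (n + i)) ↔ _
  simp [Fin.sum_univ_three, add_comm]

theorem compRecurrence_isSolution_compCount :
    compRecurrence.IsSolution fun n => (compCount {x | 0 < x ∧ x % 3 ≠ 1} (n + 1) : ℂ) :=
  compRecurrence_isSolution_iff.2 fun n => by
    exact_mod_cast compCount_add_four n

theorem compRecurrence_isSolution_inv_pow {ρ : ℂ} (hρ : 1 - ρ ^ 2 - 2 * ρ ^ 3 = 0) :
    compRecurrence.IsSolution fun n => (1 / ρ) ^ n := by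
  have hρ0 : ρ ≠ 0 := by rintro rfl; norm_num at hρ
  have cube : (1 / ρ) ^ 3 = 1 / ρ + 2 := by
    field_simp
    linear_combination hρ
  refine compRecurrence_isSolution_iff.2 fun n => ?_
  rw [pow_add, pow_add, cube]
  ring

noncomputable def closedForm (α β γ : ℂ) (n : ℕ) : ℂ :=
  (1 + α) / (2 + 6 * α) * (1 / α) ^ n + (1 + β) / (2 + 6 * β) * (1 / β) ^ n +
    (1 + γ) / (2 + 6 * γ) * (1 / γ) ^ n

theorem compRecurrence_isSolution_closedForm {α β γ : ℂ} (hα : 1 - α ^ 2 - 2 * α ^ 3 = 0)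
    (hβ : 1 - β ^ 2 - 2 * β ^ 3 = 0) (hγ : 1 - γ ^ 2 - 2 * γ ^ 3 = 0) :
    compRecurrence.IsSolution (closedForm α β γ) := by
  have sα := compRecurrence_isSolution_inv_pow hα
  have sβ := compRecurrence_isSolution_inv_pow hβ
  have sγ := compRecurrence_isSolution_inv_pow hγ
  rw [LinearRecurrence.is_sol_iff_mem_solSpace] at sα sβ sγ ⊢
  exact add_mem (add_mem (Submodule.smul_mem _ _ sα) (Submodule.smul_mem _ _ sβ))
    (Submodule.smul_mem _ _ sγ)

/-- `(ρ - σ) (ρ - τ)` is the derivative at `ρ` of `x³ + x² / 2 - 1 / 2 = -(1 - x² - 2x³) / 2`. -/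
theorem div_two_add_six_mul_eq {ρ σ τ : ℂ} (hρσ : ρ ≠ σ) (hρτ : ρ ≠ τ)
    (e1 : ρ + σ + τ = -(1 / 2)) (e2 : ρ * σ + σ * τ + τ * ρ = 0) :
    (1 + ρ) / (2 + 6 * ρ) = ρ * (1 + ρ) / (2 * ((ρ - σ) * (ρ - τ))) := by
  have key : ρ * (2 + 6 * ρ) = 2 * ((ρ - σ) * (ρ - τ)) := by
    linear_combination 4 * ρ * e1 - 2 * e2
  have hne : 2 * ((ρ - σ) * (ρ - τ)) ≠ 0 := by simp [sub_ne_zero, hρσ, hρτ]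
  rw [div_eq_div_iff (right_ne_zero_of_mul (key ▸ hne)) hne]
  linear_combination -(1 + ρ) * key

theorem closedForm_initial {α β γ : ℂ} (hαβ : α ≠ β) (hαγ : α ≠ γ) (hβγ : β ≠ γ)
    (hα : 1 - α ^ 2 - 2 * α ^ 3 = 0) (hβ : 1 - β ^ 2 - 2 * β ^ 3 = 0)
    (hγ : 1 - γ ^ 2 - 2 * γ ^ 3 = 0) :
    closedForm α β γ 0 = 1 / 2 ∧ closedForm α β γ 1 = 0 ∧ closedForm α β γ 2 = 1 := by
  obtain ⟨e1, e2, e3⟩ := vieta_cubic (a := 1 / 2) (b := 0) (c := -1 / 2) hαβ hαγ hβγ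
    (by linear_combination -hα / 2) (by linear_combination -hβ / 2)
    (by linear_combination -hγ / 2)
  have hα0 : α ≠ 0 := by rintro rfl; norm_num at hα
  have hβ0 : β ≠ 0 := by rintro rfl; norm_num at hβ
  have hγ0 : γ ≠ 0 := by rintro rfl; norm_num at hγ
  have := sub_ne_zero.2 hαβ
  have := sub_ne_zero.2 hαγ
  have := sub_ne_zero.2 hβγ
  simp only [closedForm, div_two_add_six_mul_eq hαβ hαγ e1 e2,
    div_two_add_six_mul_eq hαβ.symm hβγ (by linear_combination e1) (by linear_combination e2),
    div_two_add_six_mul_eq hαγ.symm hβγ.symm (by linear_combination e1)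
      (by linear_combination e2)]
  refine ⟨?_, ?_, (?_ : _ = 1 / (2 * (α * β * γ))).trans (by rw [e3]; norm_num)⟩
  all_goals
    field_simp
    ring

theorem closed_formula_avoiding_one_mod_three (α β γ : ℂ)
    (hαβ : α ≠ β) (hαγ : α ≠ γ) (hβγ : β ≠ γ)
    (hα : 1 - α ^ 2 - 2 * α ^ 3 = 0)
    (hβ : 1 - β ^ 2 - 2 * β ^ 3 = 0)
    (hγ : 1 - γ ^ 2 - 2 * γ ^ 3 = 0)
    (n : ℕ) (hn : 1 ≤ n) :
    (compCount {x | 0 < x ∧ x % 3 ≠ 1} n : ℂ) =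
      (1 + α) / (2 + 6 * α) * (1 / α) ^ n +
      (1 + β) / (2 + 6 * β) * (1 / β) ^ n +
      (1 + γ) / (2 + 6 * γ) * (1 / γ) ^ n := by
  obtain ⟨m, rfl⟩ := Nat.exists_eq_add_of_le' hn
  obtain ⟨f0, f1, f2⟩ := closedForm_initial hαβ hαγ hβγ hα hβ hγ
  have hf := compRecurrence_isSolution_closedForm hα hβ hγ
  -- `closedForm 0 = 1 / 2` differs from `compCount _ 0 = 1`: compare the sequences shifted by one.
  have f3 : closedForm α β γ 3 = 1 := by
    rw [compRecurrence_isSolution_iff.1 hf 0, f1, f0]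
    norm_num
  have hshift := (compRecurrence.eq_iff_eqOn_range_order _ _
    compRecurrence_isSolution_compCount hf.shift).2 fun k hk => by
      obtain rfl | rfl | rfl : k = 0 ∨ k = 1 ∨ k = 2 := by
        have : k < 3 := mem_range.1 hk
        omega
      all_goals simp [f1, f2, f3, compCount_succ, compCount_zero, Nat.sum_antidiagonal_succ]
  exact congrFun hshift m
end
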